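/- Let b ≥ 2 be an integer and k a positive integer with v = v(k). Define J_{k,0}(x) = conj(wal_k(x)) for x ∈ [0,1) and, for n ≥ 1, J_{k,n}(x) = ∫_0^x J_{k,n−1}(y) dy. Then for every integer 0 ≤ n ≤ v and every x ∈ [0,1), J_{k,n}(x) = conj(wal_{k_{>n}}(x)) · W_{k_{≤n}}(x). Moreover J_{k,n}(1) = 0 for every integer 1 ≤ n ≤ v. -/

import Mathlib

open MeasureTheory Complex
open scoped ENNReal NNReal

noncomputable section

namespace WalshPaper

/-- `ω_b = exp(2π√-1/b)`. -/
def omega (b : ℕ) : ℂ := Complex.exp (2 * Real.pi * Complex.I / b)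

/-- `conj ω_b`. -/
def omegaBar (b : ℕ) : ℂ := (starRingEnd ℂ) (omega b)

/-- The `j`-th `b`-adic digit `ξ_j` of `x ∈ [0,1)` (the coefficient of `b^{-j}`),
taking the expansion with infinitely many digits different from `b-1`. -/
def xdigit (b j : ℕ) (x : ℝ) : ℕ := (⌊x * (b : ℝ) ^ j⌋ % (b : ℤ)).toNat

/-- The `k`-th `b`-adic Walsh function: `wal_k(x) = ω_b^(κ_1 ξ_{a_1} + ⋯ + κ_v ξ_{a_v})`,
written as a sum over all digit positions of `k` (digits of `k` beyond position `k` vanish). -/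
def wal (b k : ℕ) (x : ℝ) : ℂ :=
  omega b ^ ∑ j ∈ Finset.range k, (k / b ^ j % b) * xdigit b (j + 1) x

/-- The list of terms `κ_i b^{a_i - 1}` of the `b`-adic expansion of `k`, lowest first,
i.e. `[κ_v b^{a_v-1}, …, κ_1 b^{a_1-1}]`. -/
def terms (b k : ℕ) : List ℕ :=
  (((Nat.digits b k).zipIdx.map Prod.swap).filter fun p => p.2 ≠ 0).map fun p => p.2 * b ^ p.1

/-- `v(k)`, the number of nonzero `b`-adic digits of `k`. -/
def nu (b k : ℕ) : ℕ := (terms b k).length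

/-- The list `[a_1, …, a_v]` (decreasing). -/
def alist (b k : ℕ) : List ℕ :=
  ((((Nat.digits b k).zipIdx.map Prod.swap).filter fun p => p.2 ≠ 0).map fun p => p.1 + 1).reverse

/-- The list `[κ_v, κ_{v-1}, …, κ_1]` (corresponding digits, lowest first). -/
def kappas (b k : ℕ) : List ℕ :=
  (((Nat.digits b k).zipIdx.map Prod.swap).filter fun p => p.2 ≠ 0).map fun p => p.2

/-- `μ(k) = a_1 + ⋯ + a_v`. -/
def mu (b k : ℕ) : ℕ := (alist b k).sum

/-- `μ_α(k) = a_1 + ⋯ + a_{min(α,v)}`. -/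
def muAlpha (b α k : ℕ) : ℕ := ((alist b k).take α).sum

/-- `a_v`, the smallest exponent (junk value `0` for `k = 0`). -/
def aLow (b k : ℕ) : ℕ := ((alist b k).getLast?).getD 0

/-- `κ_v`, the lowest nonzero digit of `k`. -/
def kapLow (b k : ℕ) : ℕ := k / b ^ (aLow b k - 1) % b

/-- `μ̄_α(k)`: equals `a_1 + ⋯ + a_v + (α - v) a_v` if `v ≤ α`, and `a_1 + ⋯ + a_α` else. -/
def muBar (b α k : ℕ) : ℕ :=
  if nu b k ≤ α then mu b k + (α - nu b k) * aLow b k else muAlpha b α k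

/-- `k_{≤ n} = Σ_{i=1}^{min(n,v)} κ_i b^{a_i - 1}` (the `min(n,v)` highest terms). -/
def kHigh (b k n : ℕ) : ℕ := ((terms b k).reverse.take n).sum

/-- `k_{> n} = Σ_{i=n+1}^{v} κ_i b^{a_i - 1}` (the remaining lower terms). -/
def kLow (b k n : ℕ) : ℕ := ((terms b k).reverse.drop n).sum

/-- Auxiliary function defining `W` along the list of terms of `k`, lowest term first. -/
def WAux (b : ℕ) : List ℕ → ℝ → ℂ
  | [], _ => 1
  | t :: rest, x => ∫ y in (0:ℝ)..x, (starRingEnd ℂ) (wal b t y) * WAux b rest y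

/-- `W_k : [0,1] → ℂ`, defined by `W_0 = 1` and `W_k(x) = ∫_0^x conj(wal_{κ_v b^{a_v-1}}(y)) W_{k'}(y) dy`
with `k' = k - κ_v b^{a_v-1}`. -/
def W (b k : ℕ) (x : ℝ) : ℂ := WAux b (terms b k) x

/-- `I(k) = ∫_0^1 W_k(x) dx`. -/
def I (b k : ℕ) : ℂ := ∫ x in (0:ℝ)..1, W b k x

/-- The iterated functions `W_k^{(j)}`: `W_k^{(0)} = W_k`,
`W_k^{(j+1)}(x) = ∫_0^x (W_k^{(j)}(y) - I^{(j)}(k)) dy` where `I^{(j)}(k) = ∫_0^1 W_k^{(j)}`. -/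
def Wj (b k : ℕ) : ℕ → ℝ → ℂ
  | 0 => W b k
  | j + 1 => fun x => ∫ y in (0:ℝ)..x, (Wj b k j y - ∫ t in (0:ℝ)..1, Wj b k j t)

/-- `I^{(j)}(k) = ∫_0^1 W_k^{(j)}(x) dx`. -/
def Ij (b k j : ℕ) : ℂ := ∫ x in (0:ℝ)..1, Wj b k j x

/-- The `k`-th Walsh coefficient of `f : [0,1) → ℝ`. -/
def walshCoeff (b : ℕ) (f : ℝ → ℝ) (k : ℕ) : ℂ :=
  ∫ x in (0:ℝ)..1, (f x : ℂ) * (starRingEnd ℂ) (wal b k x)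

/-- The half-open unit cube `[0,1)^s`. -/
def cube (s : ℕ) : Set (Fin s → ℝ) := Set.univ.pi fun _ => Set.Ico (0:ℝ) 1

/-- The closed unit cube `[0,1]^s`. -/
def cubeC (s : ℕ) : Set (Fin s → ℝ) := Set.univ.pi fun _ => Set.Icc (0:ℝ) 1

/-- The `k⃗`-th Walsh coefficient of `f : [0,1)^s → ℝ`. -/
def walshCoeffS (b s : ℕ) (f : (Fin s → ℝ) → ℝ) (k : Fin s → ℕ) : ℂ :=
  ∫ x in cube s, (f x : ℂ) * (starRingEnd ℂ) (∏ j, wal b (k j) (x j))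

/-- `m_b = 2 sin(π/b)`. -/
def mb (b : ℕ) : ℝ := 2 * Real.sin (Real.pi / b)

/-- `M_b = max_{c=1,…,b-1} |1 - ω_b^{-c}|`. -/
def Mb (b : ℕ) : ℝ := if Even b then 2 else 2 * Real.sin ((b + 1) * Real.pi / (2 * b))

/-- `C_v(b) = (b m_b/(b - M_b)) (1 - (M_b/b)^v)`. -/
def Cv (b v : ℕ) : ℝ := (b * mb b / (b - Mb b)) * (1 - (Mb b / b) ^ v)

/-- The partial derivative of `g` in the `j`-th coordinate. -/
def pderiv {s : ℕ} (j : Fin s) (g : (Fin s → ℝ) → ℝ) (x : Fin s → ℝ) : ℝ :=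
  deriv (fun t => g (Function.update x j t)) (x j)

/-- The mixed partial derivative `f^{(m_1,…,m_s)} = (∂/∂x_1)^{m_1} ⋯ (∂/∂x_s)^{m_s} f`. -/
def mixedPartial {s : ℕ} (m : Fin s → ℕ) (f : (Fin s → ℝ) → ℝ) : (Fin s → ℝ) → ℝ :=
  (List.finRange s).foldr (fun j g => (fun h => pderiv j h)^[m j] g) f

/-- `f` has continuous mixed partial derivatives up to order `α_j` in each variable `x_j`
on the unit cube. -/
def HasContMixedPartials {s : ℕ} (α : Fin s → ℕ) (f : (Fin s → ℝ) → ℝ) : Prop :=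
  ∀ m : Fin s → ℕ, (∀ j, m j ≤ α j) →
    ContinuousOn (mixedPartial m f) (cubeC s) ∧
      ∀ j : Fin s, m j < α j → ∀ x ∈ cubeC s,
        DifferentiableAt ℝ (fun t => mixedPartial m f (Function.update x j t)) (x j)

/-- `b_r(x) = B_r(x)/r!`, the normalized Bernoulli polynomial. -/
def bpoly (r : ℕ) (x : ℝ) : ℝ := (Polynomial.aeval x) (Polynomial.bernoulli r) / r.factorial

/-- `b̃_α(x-y)`. -/
def btilde (α : ℕ) (x y : ℝ) : ℝ :=
  if Even α then bpoly α |x - y| else (if x < y then -1 else 1) * bpoly α |x - y|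


/-- The iterated antiderivatives `J_{k,n}` of `conj (wal_k)`. -/
def Jfun (b k : ℕ) : ℕ → ℝ → ℂ
  | 0 => fun x => (starRingEnd ℂ) (wal b k x)
  | n + 1 => fun x => ∫ y in (0:ℝ)..x, Jfun b k n y

variable {b : ℕ}

lemma omega_abs (hb : 2 ≤ b) : ‖omega b‖ = 1 := by
  have : (2 * (Real.pi:ℂ) * Complex.I / b) = ((2 * Real.pi / b : ℝ) : ℂ) * Complex.I := by
    push_cast; ring
  rw [omega, this, Complex.norm_exp_ofReal_mul_I]

lemma omegaBar_eq_inv (hb : 2 ≤ b) : omegaBar b = (omega b)⁻¹ := by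
  have h1 : omegaBar b * omega b = 1 := by
    have := Complex.normSq_eq_norm_sq (omega b)
    rw [omega_abs hb] at this
    simpa [omegaBar, mul_comm, Complex.mul_conj] using congrArg (Complex.ofReal) this
  field_simp at h1 ⊢
  rw [eq_div_iff (by intro h; rw [h] at h1; simp at h1)]
  linear_combination h1

lemma isPrimitiveRoot_omega (hb : 2 ≤ b) : IsPrimitiveRoot (omega b) b :=
  Complex.isPrimitiveRoot_exp b (by omega)

lemma isPrimitiveRoot_omegaBar (hb : 2 ≤ b) : IsPrimitiveRoot (omegaBar b) b := by
  rw [omegaBar_eq_inv hb]; exact (isPrimitiveRoot_omega hb).inv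

lemma geom_sum_omegaBar (hb : 2 ≤ b) {κ : ℕ} (h0 : 0 < κ) (hκ : κ < b) :
    ∑ c ∈ Finset.range b, omegaBar b ^ (κ * c) = 0 := by
  have hprim := isPrimitiveRoot_omegaBar hb
  have hne : omegaBar b ^ κ ≠ 1 := hprim.pow_ne_one_of_pos_of_lt h0.ne' hκ
  have hpow : (omegaBar b ^ κ) ^ b = 1 := by
    rw [← pow_mul, mul_comm, pow_mul, hprim.pow_eq_one, one_pow]
  calc ∑ c ∈ Finset.range b, omegaBar b ^ (κ * c)
      = ∑ c ∈ Finset.range b, (omegaBar b ^ κ) ^ c := by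
        refine Finset.sum_congr rfl fun c _ => ?_; rw [← pow_mul]
    _ = ((omegaBar b ^ κ) ^ b - 1) / (omegaBar b ^ κ - 1) := geom_sum_eq hne b
    _ = 0 := by rw [hpow]; simp

lemma xdigit_eq (hb : 2 ≤ b) (c L j : ℕ) (hj : j ≤ L) {x : ℝ}
    (h1 : (c : ℝ) * ((b:ℝ) ^ L)⁻¹ ≤ x) (h2 : x < ((c:ℝ) + 1) * ((b:ℝ) ^ L)⁻¹) :
    xdigit b j x = c / b ^ (L - j) % b := by
  have hb0 : (0:ℝ) < b := by exact_mod_cast (by omega : 0 < b)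
  have hbL : (0:ℝ) < (b:ℝ) ^ L := by positivity
  have hbLj : (0:ℝ) < (b:ℝ) ^ (L - j) := by positivity
  have hA : (c:ℝ) ≤ x * (b:ℝ) ^ L := by
    have := mul_le_mul_of_nonneg_right h1 hbL.le
    rwa [mul_assoc, inv_mul_cancel₀ hbL.ne', mul_one] at this
  have hB : x * (b:ℝ) ^ L < (c:ℝ) + 1 := by
    have := mul_lt_mul_of_pos_right h2 hbL
    rwa [mul_assoc, inv_mul_cancel₀ hbL.ne', mul_one] at this
  set q := c / b ^ (L - j) with hq
  have hc : b ^ (L - j) * q + c % b ^ (L - j) = c := Nat.div_add_mod c _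
  have hrr : c % b ^ (L - j) < b ^ (L - j) := Nat.mod_lt _ (by positivity)
  have hsplit : x * (b:ℝ) ^ L = (x * (b:ℝ) ^ j) * (b:ℝ) ^ (L - j) := by
    rw [mul_assoc, ← pow_add]; congr 2; omega
  have key : ⌊x * (b:ℝ) ^ j⌋ = (q : ℤ) := by
    rw [Int.floor_eq_iff]
    constructor
    · have h3 : (q:ℝ) * (b:ℝ) ^ (L - j) ≤ (c:ℝ) := by
        have : (q * b ^ (L - j) : ℕ) ≤ c := Nat.div_mul_le_self c _
        exact_mod_cast this
      have h4 : (q:ℝ) * (b:ℝ) ^ (L - j) ≤ (x * (b:ℝ) ^ j) * (b:ℝ) ^ (L - j) := by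
        rw [← hsplit]; linarith
      exact le_of_mul_le_mul_right h4 hbLj
    · have h3 : (c:ℝ) + 1 ≤ ((q:ℝ) + 1) * (b:ℝ) ^ (L - j) := by
        have hexp : (q + 1) * b ^ (L - j) = b ^ (L - j) * q + b ^ (L - j) := by ring
        have : c + 1 ≤ (q + 1) * b ^ (L - j) := by linarith [hc, hrr, hexp]
        exact_mod_cast this
      have h4 : (x * (b:ℝ) ^ j) * (b:ℝ) ^ (L - j) < ((q:ℝ) + 1) * (b:ℝ) ^ (L - j) := by
        rw [← hsplit]; linarith
      have h5 := lt_of_mul_lt_mul_right h4 hbLj.le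
      push_cast
      exact h5
  rw [xdigit, key]
  rw [show ((q:ℤ) % (b:ℤ)) = ((q % b : ℕ) : ℤ) by push_cast; ring]
  exact Int.toNat_natCast _

lemma xdigit_periodic (hb : 2 ≤ b) (e : ℕ) :
    Function.Periodic (fun x => xdigit b (e + 1) x) (((b:ℝ) ^ e)⁻¹) := by
  intro x
  have hb0 : (0:ℝ) < b := by exact_mod_cast (by omega : 0 < b)
  have hbe : ((b:ℝ) ^ e) ≠ 0 := by positivity
  have h : (x + ((b:ℝ) ^ e)⁻¹) * (b:ℝ) ^ (e + 1) = x * (b:ℝ) ^ (e + 1) + (b:ℕ) := by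
    field_simp; ring
  have h2 : (⌊x * (b:ℝ) ^ (e + 1)⌋ + (b:ℤ)) % (b:ℤ) = ⌊x * (b:ℝ) ^ (e + 1)⌋ % (b:ℤ) := by
    have := Int.add_mul_emod_self_left (a := ⌊x * (b:ℝ) ^ (e + 1)⌋) (b := (b:ℤ)) (c := 1)
    simpa using this
  simp only [xdigit, h, Int.floor_add_natCast, h2]

lemma wal_zero' (x : ℝ) : wal b 0 x = 1 := by simp [wal]

lemma wal_eq_sum_range (hb : 2 ≤ b) {k N : ℕ} (h : k ≤ N) (x : ℝ) :
    wal b k x = omega b ^ ∑ j ∈ Finset.range N, (k / b ^ j % b) * xdigit b (j + 1) x := by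
  rw [wal]
  congr 1
  refine Finset.sum_subset (Finset.range_subset_range.2 h) fun j _ hj => ?_
  have hkj : k ≤ j := by simpa using hj
  have hkbj : k < b ^ j := by
    calc k ≤ j := hkj
    _ < 2 ^ j := Nat.lt_two_pow_self
    _ ≤ b ^ j := Nat.pow_le_pow_left hb j
  rw [Nat.div_eq_of_lt hkbj]
  simp

lemma dg_term (hb : 2 ≤ b) {κ : ℕ} (hκ : κ < b) (e j : ℕ) :
    κ * b ^ e / b ^ j % b = if j = e then κ else 0 := by
  have hbj : 0 < b ^ j := by positivity
  rcases lt_trichotomy j e with h | rfl | h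
  · rw [if_neg h.ne]
    have h1 : b ^ e = b ^ (e - j) * b ^ j := by rw [← pow_add]; congr 1; omega
    rw [h1, ← mul_assoc, Nat.mul_div_cancel _ hbj]
    have h2 : e - j = (e - j - 1) + 1 := by omega
    rw [h2, pow_succ, ← mul_assoc, Nat.mul_mod_left]
  · rw [if_pos rfl, Nat.mul_div_cancel _ hbj, Nat.mod_eq_of_lt hκ]
  · rw [if_neg h.ne']
    have h1 : κ * b ^ e < b ^ j := by
      calc κ * b ^ e < b * b ^ e := (Nat.mul_lt_mul_right (by positivity)).2 hκ
      _ = b ^ (e + 1) := by ring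
      _ ≤ b ^ j := Nat.pow_le_pow_right (by omega) (by omega)
    rw [Nat.div_eq_of_lt h1]
    simp

lemma wal_term (hb : 2 ≤ b) {κ : ℕ} (h0 : 0 < κ) (hκ : κ < b) (e : ℕ) (x : ℝ) :
    wal b (κ * b ^ e) x = omega b ^ (κ * xdigit b (e + 1) x) := by
  rw [wal]
  congr 1
  have he : e ∈ Finset.range (κ * b ^ e) := by
    rw [Finset.mem_range]
    calc e < 2 ^ e := Nat.lt_two_pow_self
    _ ≤ b ^ e := Nat.pow_le_pow_left hb e
    _ ≤ κ * b ^ e := Nat.le_mul_of_pos_left _ h0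
  rw [Finset.sum_eq_single e (fun j _ hje => by rw [dg_term hb hκ, if_neg hje, zero_mul])
    (fun h => absurd he h)]
  rw [dg_term hb hκ, if_pos rfl]

lemma dg_add (hb : 2 ≤ b) {κ r e : ℕ} (hκ : κ < b) (hr : r < b ^ e) (j : ℕ) :
    (κ * b ^ e + r) / b ^ j % b = κ * b ^ e / b ^ j % b + r / b ^ j % b := by
  have hbj : 0 < b ^ j := by positivity
  rw [dg_term hb hκ]
  rcases lt_trichotomy j e with h | rfl | h
  · rw [if_neg h.ne, zero_add]
    have h1 : b ^ e = b ^ (e - j) * b ^ j := by rw [← pow_add]; congr 1; omega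
    rw [h1, ← mul_assoc, add_comm, Nat.add_mul_div_right _ _ hbj]
    have h2 : κ * b ^ (e - j) = κ * b ^ (e - j - 1) * b := by
      rw [mul_assoc, ← pow_succ]; congr 2; omega
    rw [h2, Nat.add_mul_mod_self_right]
  · rw [if_pos rfl]
    have h1 : r / b ^ j = 0 := Nat.div_eq_of_lt hr
    rw [add_comm, Nat.add_mul_div_right _ _ hbj, h1]
    simp [Nat.mod_eq_of_lt hκ]
  · rw [if_neg h.ne']
    have hbej : b ^ (e + 1) ≤ b ^ j := Nat.pow_le_pow_right (by omega) (by omega)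
    have h1 : κ * b ^ e + r < b ^ j := by
      have : κ * b ^ e + r < b ^ (e + 1) := by
        have : (κ + 1) * b ^ e ≤ b ^ (e + 1) := by
          rw [pow_succ, mul_comm (b ^ e) b]
          exact Nat.mul_le_mul_right _ (by omega)
        nlinarith
      omega
    have h2 : r < b ^ j := by
      have : b ^ e ≤ b ^ j := Nat.pow_le_pow_right (by omega) (by omega)
      omega
    rw [Nat.div_eq_of_lt h1, Nat.div_eq_of_lt h2]
    simp

lemma wal_mul (hb : 2 ≤ b) {κ r e : ℕ} (hκ : κ < b) (hr : r < b ^ e) (x : ℝ) :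
    wal b (κ * b ^ e + r) x = wal b (κ * b ^ e) x * wal b r x := by
  set N := κ * b ^ e + r with hN
  rw [wal_eq_sum_range hb (le_refl N) x, wal_eq_sum_range hb (Nat.le_add_right _ _) x,
    wal_eq_sum_range hb (Nat.le_add_left _ _) x, ← pow_add, ← Finset.sum_add_distrib]
  congr 1
  refine Finset.sum_congr rfl fun j _ => ?_
  rw [dg_add hb hκ hr, add_mul]

lemma dg_ne_zero_le {k j : ℕ} (h : k / b ^ j % b ≠ 0) : b ^ j ≤ k := by
  by_contra hc
  push_neg at hc
  rw [Nat.div_eq_of_lt hc] at h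
  simp at h

lemma wal_const (hb : 2 ≤ b) {r L : ℕ} (hr : r < b ^ L) (c : ℕ) {x y : ℝ}
    (hx1 : (c : ℝ) * ((b:ℝ) ^ L)⁻¹ ≤ x) (hx2 : x < ((c:ℝ) + 1) * ((b:ℝ) ^ L)⁻¹)
    (hy1 : (c : ℝ) * ((b:ℝ) ^ L)⁻¹ ≤ y) (hy2 : y < ((c:ℝ) + 1) * ((b:ℝ) ^ L)⁻¹) :
    wal b r x = wal b r y := by
  rw [wal, wal]
  congr 1
  refine Finset.sum_congr rfl fun j _ => ?_
  rcases eq_or_ne (r / b ^ j % b) 0 with h0 | h0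
  · rw [h0, zero_mul, zero_mul]
  · have hjL : j + 1 ≤ L := by
      have h1 : b ^ j ≤ r := dg_ne_zero_le h0
      have h2 : b ^ j < b ^ L := lt_of_le_of_lt h1 hr
      have := (Nat.pow_lt_pow_iff_right (by omega : 1 < b)).1 h2
      omega
    rw [xdigit_eq hb c L (j+1) hjL hx1 hx2, xdigit_eq hb c L (j+1) hjL hy1 hy2]

lemma wal_measurable (m : ℕ) : Measurable (wal b m) := by
  have h1 : ∀ j : ℕ, Measurable fun x : ℝ => xdigit b j x := fun j =>
    (measurable_of_countable fun z : ℤ => (z % (b:ℤ)).toNat).comp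
      (measurable_id.mul_const _).floor
  have h2 : Measurable fun x : ℝ =>
      ∑ j ∈ Finset.range m, (m / b ^ j % b) * xdigit b (j + 1) x := by
    apply Finset.measurable_sum
    intro j _
    exact (measurable_of_countable fun n : ℕ => (m / b ^ j % b) * n).comp (h1 (j+1))
  exact (measurable_of_countable fun n : ℕ => omega b ^ n).comp h2

lemma wal_norm (hb : 2 ≤ b) (m : ℕ) (x : ℝ) : ‖wal b m x‖ = 1 := by
  rw [wal, norm_pow, omega_abs hb, one_pow]

lemma wal_term_periodic (hb : 2 ≤ b) {κ : ℕ} (h0 : 0 < κ) (hκ : κ < b) (e : ℕ) :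
    Function.Periodic (wal b (κ * b ^ e)) (((b:ℝ) ^ e)⁻¹) := by
  intro x
  have h : xdigit b (e + 1) (x + ((b:ℝ) ^ e)⁻¹) = xdigit b (e + 1) x := xdigit_periodic hb e x
  rw [wal_term hb h0 hκ, wal_term hb h0 hκ, h]

def Valid (b : ℕ) : ℕ → List ℕ → Prop
  | _, [] => True
  | e, t :: rest => ∃ κ f, 0 < κ ∧ κ < b ∧ e ≤ f ∧ t = κ * b ^ f ∧ Valid b (f + 1) rest

def termsAux (b : ℕ) : ℕ → List ℕ → List ℕ
  | _, [] => []
  | e, d :: L => (if d = 0 then [] else [d * b ^ e]) ++ termsAux b (e + 1) L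

lemma termsAux_enumFrom (L : List ℕ) : ∀ n : ℕ,
    (((L.zipIdx n).map Prod.swap).filter fun p => p.2 ≠ 0).map (fun p => p.2 * b ^ p.1)
      = termsAux b n L := by
  induction L with
  | nil => intro n; simp [termsAux]
  | cons d L ih =>
    intro n
    rw [List.zipIdx_cons, List.map_cons, termsAux]
    have h := ih (n + 1)
    simp only [ne_eq, decide_not] at h ⊢
    rcases eq_or_ne d 0 with rfl | hd
    · simp [List.filter_cons, h]
    · simp [List.filter_cons, hd, h]

lemma terms_eq_termsAux (k : ℕ) : terms b k = termsAux b 0 (Nat.digits b k) := by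
  rw [terms, termsAux_enumFrom]

lemma valid_mono {e e' : ℕ} (h : e' ≤ e) {ts : List ℕ} (hv : Valid b e ts) :
    Valid b e' ts := by
  cases ts with
  | nil => trivial
  | cons t rest =>
    obtain ⟨κ, f, h1, h2, h3, h4, h5⟩ := hv
    exact ⟨κ, f, h1, h2, le_trans h h3, h4, h5⟩

lemma valid_termsAux (hb : 2 ≤ b) (L : List ℕ) : ∀ e : ℕ, (∀ d ∈ L, d < b) →
    Valid b e (termsAux b e L) := by
  induction L with
  | nil => intro e _; trivial
  | cons d L ih =>
    intro e hL
    rw [termsAux]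
    rcases eq_or_ne d 0 with rfl | hd
    · rw [if_pos rfl, List.nil_append]
      exact valid_mono (Nat.le_succ e) (ih (e+1) fun x hx => hL x (List.mem_cons_of_mem _ hx))
    · rw [if_neg hd, List.singleton_append]
      exact ⟨d, e, Nat.pos_of_ne_zero hd, hL d List.mem_cons_self, le_refl e, rfl,
        ih (e+1) fun x hx => hL x (List.mem_cons_of_mem _ hx)⟩

lemma sum_termsAux (L : List ℕ) : ∀ e : ℕ,
    (termsAux b e L).sum = Nat.ofDigits b L * b ^ e := by
  induction L with
  | nil => intro e; simp [termsAux]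
  | cons d L ih =>
    intro e
    rw [termsAux, List.sum_append, ih (e+1), Nat.ofDigits_cons]
    rcases eq_or_ne d 0 with rfl | hd
    · simp [pow_succ]; ring
    · rw [if_neg hd]
      simp [pow_succ]; ring

lemma terms_sum (k : ℕ) : (terms b k).sum = k := by
  rw [terms_eq_termsAux, sum_termsAux, pow_zero, mul_one, Nat.ofDigits_digits]

lemma valid_dvd {ts : List ℕ} : ∀ e : ℕ, Valid b e ts → b ^ e ∣ ts.sum := by
  induction ts with
  | nil => intro e _; simp
  | cons t rest ih =>
    rintro e ⟨κ, f, h1, h2, h3, rfl, h5⟩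
    rw [List.sum_cons]
    refine Dvd.dvd.add (Dvd.dvd.mul_left (pow_dvd_pow b h3) κ) ?_
    exact dvd_trans (pow_dvd_pow b (by omega)) (ih (f+1) h5)

lemma valid_sum_terms (hb : 2 ≤ b) : ∀ m : ℕ, ∀ e (ts : List ℕ), Valid b e ts →
    ts.sum = m * b ^ e → termsAux b e (Nat.digits b m) = ts := by
  intro m
  induction m using Nat.strong_induction_on with
  | _ m IH =>
    intro e ts hv hsum
    cases ts with
    | nil =>
      have hm : m = 0 := by
        have : m * b ^ e = 0 := by rw [← hsum]; simp
        have hbe : 0 < b ^ e := by positivity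
        exact Nat.mul_eq_zero.1 this |>.resolve_right (by omega)
      rw [hm]; simp [termsAux]
    | cons t rest =>
      obtain ⟨κ, f, hκ0, hκb, hef, rfl, hrest⟩ := hv
      obtain ⟨s, hs⟩ : b ^ (f + 1) ∣ rest.sum := valid_dvd (f+1) hrest
      have hbe : 0 < b ^ e := by positivity
      have hm0 : 0 < m := by
        rcases Nat.eq_zero_or_pos m with rfl | h
        · exfalso
          have h7 : κ * b ^ f + rest.sum = 0 := by simpa using hsum
          have hbf : 0 < κ * b ^ f := by positivity
          omega
        · exact h
      rw [Nat.digits_def' (by omega : 1 < b) hm0, termsAux]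
      rcases eq_or_lt_of_le hef with rfl | hlt
      · -- e = f
        have hmeq : m = κ + b * s := by
          have h1 : (κ + b * s) * b ^ e = m * b ^ e := by
            rw [← hsum, List.sum_cons, hs]; ring
          exact (Nat.eq_of_mul_eq_mul_right hbe h1).symm
        have hmod : m % b = κ := by rw [hmeq, Nat.add_mul_mod_self_left, Nat.mod_eq_of_lt hκb]
        have hdiv : m / b = s := by
          rw [hmeq, Nat.add_mul_div_left _ _ (by omega : 0 < b), Nat.div_eq_of_lt hκb]
          omega
        rw [hmod, if_neg (by omega), hdiv, List.singleton_append]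
        congr 1
        refine IH s ?_ (e+1) rest hrest (by rw [hs]; ring)
        rcases Nat.eq_zero_or_pos s with rfl | hs0
        · omega
        · calc s < b * s := by nlinarith
          _ ≤ κ + b * s := by omega
          _ = m := hmeq.symm
      · -- e < f
        obtain ⟨g, rfl⟩ : ∃ g, f = e + 1 + g := ⟨f - (e+1), by omega⟩
        set C := κ * b ^ g + b ^ (g + 1) * s with hC
        have hmeq : m = b * C := by
          have h1 : (b * C) * b ^ e = m * b ^ e := by
            rw [← hsum, List.sum_cons, hs, hC]; ring
          exact (Nat.eq_of_mul_eq_mul_right hbe h1).symm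
        have hC0 : 0 < C := by
          have hbg : 0 < b ^ g := by positivity
          have : 0 < κ * b ^ g := by positivity
          omega
        have hmod : m % b = 0 := by rw [hmeq]; simp
        have hdiv : m / b = C := by rw [hmeq]; exact Nat.mul_div_cancel_left _ (by omega)
        rw [hmod, if_pos rfl, List.nil_append, hdiv]
        refine IH C (by rw [hmeq]; nlinarith) (e+1) _ ⟨κ, e + 1 + g, hκ0, hκb, by omega, rfl, hrest⟩ ?_
        rw [List.sum_cons, hs, hC]; ring

lemma valid_get (hb : 2 ≤ b) : ∀ (ts : List ℕ) (e : ℕ), Valid b e ts →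
    ∀ j (hj : j < ts.length), ∃ κ f, 0 < κ ∧ κ < b ∧ ts.get ⟨j, hj⟩ = κ * b ^ f ∧
      (ts.take j).sum + b ^ e ≤ b ^ f ∧ Valid b (f + 1) (ts.drop (j + 1)) := by
  intro ts
  induction ts with
  | nil => intro e _ j hj; simp at hj
  | cons t rest ih =>
    rintro e ⟨κ₀, f₀, h1, h2, h3, rfl, h5⟩ j hj
    cases j with
    | zero =>
      exact ⟨κ₀, f₀, h1, h2, rfl, by
        simpa using Nat.pow_le_pow_right (by omega : 1 ≤ b) h3, by simpa using h5⟩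
    | succ j =>
      obtain ⟨κ, f, g1, g2, g3, g4, g5⟩ := ih (f₀ + 1) h5 j (by simpa using hj)
      refine ⟨κ, f, g1, g2, by simpa using g3, ?_, by simpa using g5⟩
      have hb1 : b ^ e ≤ b ^ f₀ := Nat.pow_le_pow_right (by omega : 1 ≤ b) h3
      have hb2 : κ₀ * b ^ f₀ + b ^ f₀ ≤ b ^ (f₀ + 1) := by
        have h6 := Nat.mul_le_mul_right (b ^ f₀) (show κ₀ + 1 ≤ b by omega)
        rw [pow_succ]
        calc κ₀ * b ^ f₀ + b ^ f₀ = (κ₀ + 1) * b ^ f₀ := by ring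
        _ ≤ b * b ^ f₀ := h6
        _ = b ^ f₀ * b := by ring
      have : ((κ₀ * b ^ f₀ :: rest).take (j+1)).sum = κ₀ * b ^ f₀ + (rest.take j).sum := by
        simp
      rw [this]
      omega

lemma valid_drop {ts : List ℕ} {e : ℕ} (hv : Valid b e ts) (hb : 2 ≤ b) (j : ℕ) :
    Valid b 0 (ts.drop j) := by
  cases j with
  | zero => exact valid_mono (Nat.zero_le e) hv
  | succ j =>
    by_cases hj : j < ts.length
    · obtain ⟨κ, f, _, _, _, _, h5⟩ := valid_get hb ts e hv j hj
      exact valid_mono (Nat.zero_le _) h5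
    · rw [List.drop_eq_nil_of_le (by omega)]
      trivial

lemma integrable_wal_mul (hb : 2 ≤ b) {G : ℝ → ℂ} (hG : Continuous G) (m : ℕ) (u v : ℝ) :
    IntervalIntegrable (fun y => (starRingEnd ℂ) (wal b m y) * G y) volume u v := by
  have h1 : IntervalIntegrable (fun y => (starRingEnd ℂ) (wal b m y)) volume u v := by
    have hm : Measurable fun y => (starRingEnd ℂ) (wal b m y) :=
      Complex.continuous_conj.measurable.comp (wal_measurable m)
    constructor <;>
    · refine MeasureTheory.Integrable.mono' (g := fun _ => 1)
        (MeasureTheory.integrableOn_const measure_Ioc_lt_top.ne)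
        hm.aestronglyMeasurable (MeasureTheory.ae_of_all _ fun y => ?_)
      rw [RCLike.norm_conj, wal_norm hb]
  exact h1.mul_continuousOn hG.continuousOn

lemma waux_struct (hb : 2 ≤ b) : ∀ (ts : List ℕ) (e : ℕ), Valid b e ts →
    Continuous (WAux b ts) ∧ Function.Periodic (WAux b ts) (((b:ℝ) ^ e)⁻¹) := by
  intro ts
  induction ts with
  | nil =>
    intro e _
    exact ⟨continuous_const, fun x => rfl⟩
  | cons t rest ih =>
    rintro e ⟨κ, f, hκ0, hκb, hef, rfl, hrest⟩
    obtain ⟨hGc, hGper⟩ := ih (f + 1) hrest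
    have hbR : (1:ℝ) < b := by exact_mod_cast (by omega : 1 < b)
    set q : ℝ := ((b:ℝ) ^ (f + 1))⁻¹ with hq
    set p : ℝ := ((b:ℝ) ^ f)⁻¹ with hp
    have hq0 : 0 < q := by rw [hq]; positivity
    have hp0 : 0 < p := by rw [hp]; positivity
    have hpq : p = (b:ℕ) * q := by
      rw [hp, hq, pow_succ]
      push_cast
      field_simp
    have hG'per_p : Function.Periodic (WAux b rest) p := by
      rw [hpq]; exact hGper.nat_mul b
    set h : ℝ → ℂ := fun y => (starRingEnd ℂ) (wal b (κ * b ^ f) y) * WAux b rest y with hh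
    have hInt : ∀ u v : ℝ, IntervalIntegrable h volume u v := fun u v =>
      integrable_wal_mul hb hGc _ u v
    have hcont : Continuous (WAux b (κ * b ^ f :: rest)) := by
      have := intervalIntegral.continuous_primitive hInt 0
      exact this
    refine ⟨hcont, ?_⟩
    have hh_per : Function.Periodic h p := by
      intro y
      have h1 := wal_term_periodic hb hκ0 hκb f y
      rw [hp] at *
      simp only [hh]
      rw [h1, hG'per_p y]
    have key : (∫ y in (0:ℝ)..p, h y) = 0 := by
      have hsplit : (∫ y in (0:ℝ)..p, h y)
          = ∑ c ∈ Finset.range b, ∫ y in ((c:ℝ) * q)..(((c:ℝ) + 1) * q), h y := by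
        have hs := intervalIntegral.sum_integral_adjacent_intervals
          (a := fun i : ℕ => (i : ℝ) * q) (n := b) (f := h) (μ := volume)
          (fun i _ => hInt _ _)
        simp only [Nat.cast_zero, Nat.cast_add, Nat.cast_one, zero_mul] at hs
        rw [hpq]
        exact hs.symm
      rw [hsplit]
      have hterm : ∀ c ∈ Finset.range b, (∫ y in ((c:ℝ) * q)..(((c:ℝ) + 1) * q), h y)
          = omegaBar b ^ (κ * c) * ∫ y in (0:ℝ)..q, WAux b rest y := by
        intro c hc
        rw [Finset.mem_range] at hc
        have hstep1 : (∫ y in ((c:ℝ) * q)..(((c:ℝ) + 1) * q), h y)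
            = ∫ y in ((c:ℝ) * q)..(((c:ℝ) + 1) * q), omegaBar b ^ (κ * c) * WAux b rest y := by
          apply intervalIntegral.integral_congr_ae
          have hne : ∀ᵐ (y : ℝ), y ≠ ((c:ℝ) + 1) * q := by
            rw [MeasureTheory.ae_iff]
            simpa using Real.volume_singleton
          filter_upwards [hne] with y hy hmem
          rw [Set.uIoc_of_le (by nlinarith : (c:ℝ) * q ≤ ((c:ℝ) + 1) * q)] at hmem
          have h1 : (c:ℝ) * q ≤ y := le_of_lt hmem.1
          have h2 : y < ((c:ℝ) + 1) * q := lt_of_le_of_ne hmem.2 hy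
          have hxd : xdigit b (f + 1) y = c := by
            have := xdigit_eq hb c (f + 1) (f + 1) (le_refl _) (x := y) (by exact h1) (by exact h2)
            simpa [Nat.mod_eq_of_lt hc] using this
          simp only [hh]
          rw [wal_term hb hκ0 hκb, hxd, omegaBar, ← map_pow]
        rw [hstep1, intervalIntegral.integral_const_mul]
        congr 1
        have h3 : ((c:ℝ) + 1) * q = (c:ℝ) * q + q := by ring
        rw [h3, hGper.intervalIntegral_add_eq ((c:ℝ) * q) 0, zero_add]
      rw [Finset.sum_congr rfl hterm, ← Finset.sum_mul, geom_sum_omegaBar hb hκ0 hκb, zero_mul]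
    have hper_p : Function.Periodic (WAux b (κ * b ^ f :: rest)) p := by
      intro x
      have hadd := intervalIntegral.integral_add_adjacent_intervals (hInt 0 x) (hInt x (x + p))
      have hshift : (∫ y in x..(x + p), h y) = ∫ y in (0:ℝ)..(0 + p), h y :=
        hh_per.intervalIntegral_add_eq x 0
      show (∫ y in (0:ℝ)..(x + p), h y) = ∫ y in (0:ℝ)..x, h y
      rw [← hadd, hshift, zero_add, key, add_zero]
    have hfin : ((b:ℝ) ^ e)⁻¹ = ((b ^ (f - e) : ℕ) : ℝ) * p := by
      have hbne : (b:ℝ) ≠ 0 := by positivity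
      have hfe : (b:ℝ) ^ f = (b:ℝ) ^ (f - e) * (b:ℝ) ^ e := by
        rw [← pow_add]; congr 1; omega
      rw [hp]
      push_cast
      rw [hfe, mul_inv]
      field_simp
    rw [hfin]
    exact hper_p.nat_mul _

lemma waux_nat_mul_zero (hb : 2 ≤ b) {ts : List ℕ} {e : ℕ} (hv : Valid b e ts)
    (hne : ts ≠ []) : ∀ i : ℕ, WAux b ts ((i : ℝ) * ((b:ℝ) ^ e)⁻¹) = 0 := by
  obtain ⟨hcont, hper⟩ := waux_struct hb ts e hv
  have h0 : WAux b ts 0 = 0 := by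
    cases ts with
    | nil => exact absurd rfl hne
    | cons t rest => simp [WAux]
  intro i
  induction i with
  | zero => simpa using h0
  | succ i ih =>
    have : ((i:ℝ) + 1) * ((b:ℝ) ^ e)⁻¹ = (i:ℝ) * ((b:ℝ) ^ e)⁻¹ + ((b:ℝ) ^ e)⁻¹ := by ring
    push_cast
    rw [this, hper _]
    exact ih

lemma main_step (hb : 2 ≤ b) {κ f r : ℕ} {hi : List ℕ} (hκ0 : 0 < κ) (hκb : κ < b)
    (hr : r < b ^ f) (hhi : Valid b (f + 1) hi) {x : ℝ} (hx : 0 ≤ x) :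
    (∫ y in (0:ℝ)..x, (starRingEnd ℂ) (wal b (κ * b ^ f + r) y) * WAux b hi y)
      = (starRingEnd ℂ) (wal b r x) * WAux b (κ * b ^ f :: hi) x := by
  have hbR : (1:ℝ) < b := by exact_mod_cast (by omega : 1 < b)
  set p : ℝ := ((b:ℝ) ^ f)⁻¹ with hp
  have hp0 : 0 < p := by rw [hp]; positivity
  have hvc : Valid b f (κ * b ^ f :: hi) := ⟨κ, f, hκ0, hκb, le_refl f, rfl, hhi⟩
  obtain ⟨hHc, hHper⟩ := waux_struct hb (κ * b ^ f :: hi) f hvc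
  have hHmul : ∀ i : ℕ, WAux b (κ * b ^ f :: hi) ((i : ℝ) * p) = 0 :=
    waux_nat_mul_zero hb hvc (by simp) 
  have hGc : Continuous (WAux b hi) := (waux_struct hb hi (f + 1) hhi).1
  set g : ℝ → ℂ := fun y => (starRingEnd ℂ) (wal b (κ * b ^ f + r) y) * WAux b hi y with hg
  set h : ℝ → ℂ := fun y => (starRingEnd ℂ) (wal b (κ * b ^ f) y) * WAux b hi y with hh
  have hgInt : ∀ u v : ℝ, IntervalIntegrable g volume u v := fun u v =>
    integrable_wal_mul hb hGc _ u v
  have hhInt : ∀ u v : ℝ, IntervalIntegrable h volume u v := fun u v =>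
    integrable_wal_mul hb hGc _ u v
  have hH : ∀ z : ℝ, WAux b (κ * b ^ f :: hi) z = ∫ y in (0:ℝ)..z, h y := fun z => rfl
  have hHdiff : ∀ u v : ℝ, (∫ y in u..v, h y)
      = WAux b (κ * b ^ f :: hi) v - WAux b (κ * b ^ f :: hi) u := by
    intro u v
    have := intervalIntegral.integral_add_adjacent_intervals (hhInt 0 u) (hhInt u v)
    rw [hH u, hH v, ← this]
    ring
  set c : ℕ := ⌊x * (b:ℝ) ^ f⌋.toNat with hc
  have hbf0 : (0:ℝ) < (b:ℝ) ^ f := by positivity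
  have hfl : (⌊x * (b:ℝ) ^ f⌋ : ℝ) = (c : ℝ) := by
    have h1 : ((c:ℕ) : ℤ) = ⌊x * (b:ℝ) ^ f⌋ := by
      rw [hc]; exact Int.toNat_of_nonneg (Int.floor_nonneg.2 (by positivity))
    exact_mod_cast h1.symm
  have hcx1 : (c:ℝ) * p ≤ x := by
    have h1 : (c:ℝ) ≤ x * (b:ℝ) ^ f := by rw [← hfl]; exact Int.floor_le _
    rw [hp]
    calc (c:ℝ) * ((b:ℝ) ^ f)⁻¹ ≤ (x * (b:ℝ) ^ f) * ((b:ℝ) ^ f)⁻¹ :=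
      mul_le_mul_of_nonneg_right h1 (by positivity)
    _ = x := by field_simp
  have hcx2 : x < ((c:ℝ) + 1) * p := by
    have h1 : x * (b:ℝ) ^ f < (c:ℝ) + 1 := by rw [← hfl]; exact Int.lt_floor_add_one _
    rw [hp]
    calc x = (x * (b:ℝ) ^ f) * ((b:ℝ) ^ f)⁻¹ := by field_simp
    _ < ((c:ℝ) + 1) * ((b:ℝ) ^ f)⁻¹ := by
      exact mul_lt_mul_of_pos_right h1 (by positivity)
  have hwal_split : ∀ y : ℝ, g y = (starRingEnd ℂ) (wal b r y) * h y := by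
    intro y
    simp only [hg, hh]
    rw [wal_mul hb hκb hr, map_mul]
    ring
  -- sum over full intervals vanishes
  have hfull : (∫ y in (0:ℝ)..((c:ℝ) * p), g y) = 0 := by
    have hs := intervalIntegral.sum_integral_adjacent_intervals
      (a := fun i : ℕ => (i : ℝ) * p) (n := c) (f := g) (μ := volume)
      (fun i _ => hgInt _ _)
    simp only [Nat.cast_zero, Nat.cast_add, Nat.cast_one, zero_mul] at hs
    rw [← hs]
    refine Finset.sum_eq_zero fun i _ => ?_
    have hstep1 : (∫ y in ((i:ℝ) * p)..(((i:ℝ) + 1) * p), g y)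
        = ∫ y in ((i:ℝ) * p)..(((i:ℝ) + 1) * p), (starRingEnd ℂ) (wal b r ((i:ℝ) * p)) * h y := by
      apply intervalIntegral.integral_congr_ae
      have hne : ∀ᵐ (y : ℝ), y ≠ ((i:ℝ) + 1) * p := by
        rw [MeasureTheory.ae_iff]
        simpa using Real.volume_singleton
      filter_upwards [hne] with y hy hmem
      rw [Set.uIoc_of_le (by nlinarith : (i:ℝ) * p ≤ ((i:ℝ) + 1) * p)] at hmem
      have h1 : (i:ℝ) * p ≤ y := le_of_lt hmem.1
      have h2 : y < ((i:ℝ) + 1) * p := lt_of_le_of_ne hmem.2 hy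
      rw [hwal_split y]
      congr 2
      exact wal_const hb hr i (x := y) (y := (i:ℝ) * p) h1 h2 (le_refl _)
        (by nlinarith)
    rw [hstep1, intervalIntegral.integral_const_mul, hHdiff]
    have e1 : ((i:ℝ) + 1) * p = ((i + 1 : ℕ) : ℝ) * p := by push_cast; ring
    rw [e1, hHmul (i + 1), hHmul i, sub_zero, mul_zero]
  -- the last partial interval
  have hlast : (∫ y in ((c:ℝ) * p)..x, g y)
      = (starRingEnd ℂ) (wal b r x) * WAux b (κ * b ^ f :: hi) x := by
    have hstep1 : (∫ y in ((c:ℝ) * p)..x, g y)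
        = ∫ y in ((c:ℝ) * p)..x, (starRingEnd ℂ) (wal b r x) * h y := by
      apply intervalIntegral.integral_congr
      intro y hy
      rw [Set.uIcc_of_le hcx1] at hy
      rw [hwal_split y]
      congr 2
      exact wal_const hb hr c (x := y) (y := x) (le_trans (le_refl _) hy.1)
        (lt_of_le_of_lt hy.2 hcx2) hcx1 hcx2
    rw [hstep1, intervalIntegral.integral_const_mul, hHdiff, hHmul c, sub_zero]
  calc (∫ y in (0:ℝ)..x, g y)
      = (∫ y in (0:ℝ)..((c:ℝ) * p), g y) + ∫ y in ((c:ℝ) * p)..x, g y :=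
        (intervalIntegral.integral_add_adjacent_intervals (hgInt _ _) (hgInt _ _)).symm
    _ = (starRingEnd ℂ) (wal b r x) * WAux b (κ * b ^ f :: hi) x := by
        rw [hfull, hlast, zero_add]

lemma valid_terms (hb : 2 ≤ b) (k : ℕ) : Valid b 0 (terms b k) := by
  rw [terms_eq_termsAux]
  exact valid_termsAux hb _ 0 fun d hd => Nat.digits_lt_base (by omega) hd

lemma keyP (hb : 2 ≤ b) (k n : ℕ) :
    n ≤ (terms b k).length → ∀ x : ℝ, 0 ≤ x →
      Jfun b k n x = (starRingEnd ℂ)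
          (wal b (((terms b k).take ((terms b k).length - n)).sum) x)
        * WAux b ((terms b k).drop ((terms b k).length - n)) x := by
  induction n with
  | zero =>
    intro _ x _
    simp only [Nat.sub_zero, List.take_length, List.drop_length, Jfun]
    rw [terms_sum]
    simp [WAux]
  | succ n ih =>
    intro hn x hx
    set ts := terms b k with hts
    set v := ts.length with hv
    have hj : v - (n + 1) < v := by omega
    obtain ⟨κ, f, hκ0, hκb, hget, hbound, hvdrop⟩ :=
      valid_get hb ts 0 (valid_terms hb k) (v - (n + 1)) hj
    have hr : (ts.take (v - (n + 1))).sum < b ^ f := by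
      rw [pow_zero] at hbound; omega
    have hvn : v - n = (v - (n + 1)) + 1 := by omega
    have hgetE : ts[v - (n + 1)]'hj = κ * b ^ f := hget
    have htake : (ts.take (v - n)).sum = κ * b ^ f + (ts.take (v - (n + 1))).sum := by
      rw [hvn, ← List.take_concat_get hj, List.sum_concat, hgetE]
      ring
    have hdrop : ts.drop (v - (n + 1)) = (κ * b ^ f) :: ts.drop (v - n) := by
      rw [hvn, List.drop_eq_getElem_cons hj, hgetE]
    have hvdrop' : Valid b (f + 1) (ts.drop (v - n)) := by rw [hvn]; exact hvdrop
    show (∫ y in (0:ℝ)..x, Jfun b k n y) = _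
    have hcongr : (∫ y in (0:ℝ)..x, Jfun b k n y) = ∫ y in (0:ℝ)..x,
        (starRingEnd ℂ) (wal b (κ * b ^ f + (ts.take (v - (n + 1))).sum) y)
          * WAux b (ts.drop (v - n)) y := by
      apply intervalIntegral.integral_congr
      intro y hy
      rw [Set.uIcc_of_le hx] at hy
      rw [ih (by omega) y hy.1, htake]
    rw [hcongr, main_step hb hκ0 hκb hr hvdrop' hx, hdrop]

lemma kLow_eq (k n : ℕ) :
    kLow b k n = ((terms b k).take ((terms b k).length - n)).sum := by
  rw [kLow, List.drop_reverse, List.sum_reverse]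

lemma kHigh_eq (k n : ℕ) :
    kHigh b k n = ((terms b k).drop ((terms b k).length - n)).sum := by
  rw [kHigh, List.take_reverse, List.sum_reverse]

lemma W_kHigh (hb : 2 ≤ b) (k n : ℕ) (x : ℝ) :
    W b (kHigh b k n) x = WAux b ((terms b k).drop ((terms b k).length - n)) x := by
  rw [W, kHigh_eq]
  congr 1
  rw [terms_eq_termsAux]
  exact valid_sum_terms hb _ 0 _ (valid_drop (valid_terms hb k) hb _)
    (by rw [pow_zero, mul_one])

/-- Lemma 2.3 (antiderivatives of Walsh functions). -/
theorem antideriv_walsh (b : ℕ) (hb : 2 ≤ b) (k : ℕ) (hk : 0 < k) :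
    (∀ n : ℕ, n ≤ nu b k → ∀ x ∈ Set.Ico (0:ℝ) 1,
      Jfun b k n x = (starRingEnd ℂ) (wal b (kLow b k n) x) * W b (kHigh b k n) x) ∧
    (∀ n : ℕ, 1 ≤ n → n ≤ nu b k → Jfun b k n 1 = 0) := by
  have hts : Valid b 0 (terms b k) := valid_terms hb k
  have hnu : nu b k = (terms b k).length := rfl
  constructor
  · intro n hn x hx
    rw [keyP hb k n (by rw [← hnu]; exact hn) x hx.1, kLow_eq, W_kHigh hb]
  · intro n hn1 hnv
    rw [keyP hb k n (by rw [← hnu]; exact hnv) 1 (by norm_num)]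
    have hne : (terms b k).drop ((terms b k).length - n) ≠ [] := by
      apply List.ne_nil_of_length_pos
      rw [List.length_drop]
      rw [hnu] at hnv
      omega
    have h0 := waux_nat_mul_zero hb (valid_drop hts hb ((terms b k).length - n)) hne 1
    simp only [pow_zero, inv_one, Nat.cast_one, one_mul] at h0
    rw [h0, mul_zero]


end WalshPaper
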